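/- Let V be a finite type with n = |V|, let F be a nonempty superset-closed family of finsets of V, and let t be a natural number with t ≤ n. Then the minimum cardinality of a member of F is at most n − t if and only if there is an induced copy of the hypercube Q_t in the TAR graph of F, i.e., an injective map f from Finset (Fin t) into F such that f(A) and f(B) are adjacent in the TAR graph of F if and only if the symmetric difference A △ B has exactly one element. -/

import Mathlib

variable {V : Type*} [Fintype V] [DecidableEq V]

/-- A family of finsets is superset-closed if it is closed under taking supersets. -/
def SupersetClosed (F : Finset (Finset V)) : Prop :=
  ∀ ⦃S T : Finset V⦄, S ∈ F → S ⊆ T → T ∈ F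

/-- A minimal member of a family: a member no proper subset of which is a member. -/
def IsMinimalMem (F : Finset (Finset V)) (M : Finset V) : Prop :=
  M ∈ F ∧ ∀ M' : Finset V, M' ⊂ M → M' ∉ F

/-- The TAR graph of a family of finsets: vertices are the members of the family,
two members being adjacent iff their symmetric difference has exactly one element. -/
def TARGraph (F : Finset (Finset V)) : SimpleGraph {S : Finset V // S ∈ F} where
  Adj S T := (symmDiff S.1 T.1).card = 1
  symm := ⟨fun S T h => by
    change (symmDiff S.1 T.1).card = 1 at h
    change (symmDiff T.1 S.1).card = 1
    rwa [symmDiff_comm] at h⟩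
  loopless := ⟨fun S h => by
    change (symmDiff S.1 S.1).card = 1 at h
    simp [symmDiff_self] at h⟩

instance (F : Finset (Finset V)) : DecidableRel (TARGraph F).Adj :=
  fun S T => inferInstanceAs (Decidable ((symmDiff S.1 T.1).card = 1))

/-!
If `S ∈ F` has at most `n - t` elements, pick `t` distinct points `e i` outside `S`: the sets
`S ∆ e(A) = S ∪ e(A)` lie in `F` by superset-closedness and form an induced copy of `Q_t`.

Conversely, an injective adjacency-preserving map `g` from `Q_t` to the Boolean lattice is a
subcube: `g A = g ∅ ∆ e(A)` for some injective `e`. This follows by strong induction on `A`,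
because in the Boolean lattice the only common neighbour of `X ∆ {a}` and `X ∆ {b}` other than `X`
is `X ∆ {a} ∆ {b}`. The vertex of that subcube obtained by deleting from `g ∅` all the directions
`e i` has at most `n - t` elements.
-/

open Finset Function
open scoped symmDiff

namespace Finset

variable {α ι : Type*} [DecidableEq α]

lemma mem_and_card_eq_two_of_card_symmDiff_singleton {u : Finset α} {a : α}
    (hu : u.Nonempty) (h : #(u ∆ {a}) = 1) : a ∈ u ∧ #u = 2 := by
  have hpos := hu.card_pos
  by_cases ha : a ∈ u
  · rw [symmDiff_of_ge (singleton_subset_iff.2 ha), sdiff_singleton_eq_erase,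
      card_erase_of_mem ha] at h
    exact ⟨ha, by omega⟩
  · have hdisj : Disjoint u {a} := disjoint_singleton_right.2 ha
    rw [symmDiff_eq_union hdisj, card_union_of_disjoint hdisj, card_singleton] at h
    omega

lemma eq_symmDiff_symmDiff_of_card_symmDiff {W X : Finset α} {a b : α} (hab : a ≠ b)
    (hWX : W ≠ X) (ha : #(W ∆ (X ∆ {a})) = 1) (hb : #(W ∆ (X ∆ {b})) = 1) :
    W = X ∆ {a} ∆ {b} := by
  have hu : (X ∆ W).Nonempty := symmDiff_nonempty.2 hWX.symm
  obtain ⟨hau, hcard⟩ := mem_and_card_eq_two_of_card_symmDiff_singleton (a := a) hu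
    (by rwa [symmDiff_comm X W, symmDiff_assoc])
  obtain ⟨hbu, -⟩ := mem_and_card_eq_two_of_card_symmDiff_singleton (a := b) hu
    (by rwa [symmDiff_comm X W, symmDiff_assoc])
  have hpair : X ∆ W = {a} ∆ {b} := by
    rw [symmDiff_eq_union (disjoint_singleton.2 hab), ← insert_eq]
    exact (eq_of_subset_of_card_le (insert_subset hau (singleton_subset_iff.2 hbu))
      (by rw [hcard, card_pair hab])).symm
  rw [symmDiff_assoc, ← hpair, symmDiff_symmDiff_cancel_left]

lemma symmDiff_singleton_ssubset {s : Finset α} {a : α} (h : a ∈ s) : s ∆ {a} ⊂ s := by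
  rw [symmDiff_of_ge (singleton_subset_iff.2 h), sdiff_singleton_eq_erase]
  exact erase_ssubset h

lemma image_symmDiff_singleton [DecidableEq ι] {e : ι → α} (he : Injective e) (s : Finset ι)
    (i : ι) :
    (s ∆ {i}).image e = s.image e ∆ {e i} := by
  rw [image_symmDiff _ _ he, image_singleton]

lemma exists_injective_eq_symmDiff_singleton [DecidableEq ι] {g : Finset ι → Finset α}
    (hg : Injective g) (hadj : ∀ A B, #(A ∆ B) = 1 → #(g A ∆ g B) = 1) :
    ∃ e : ι → α, Injective e ∧ ∀ i, g {i} = g ∅ ∆ {e i} := by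
  have hdir : ∀ i, ∃ a, g ∅ ∆ g {i} = {a} := fun i =>
    card_eq_one.1 (hadj _ _ (by rw [← bot_eq_empty, bot_symmDiff, card_singleton]))
  choose e he using hdir
  have hsingle : ∀ i, g {i} = g ∅ ∆ {e i} := fun i => by
    rw [← he i, symmDiff_symmDiff_cancel_left]
  exact ⟨e, fun i j h => singleton_injective (hg (by rw [hsingle, hsingle, h])), hsingle⟩

theorem exists_injective_eq_symmDiff_image [DecidableEq ι] {g : Finset ι → Finset α}
    (hg : Injective g) (hadj : ∀ A B, #(A ∆ B) = 1 → #(g A ∆ g B) = 1) :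
    ∃ e : ι → α, Injective e ∧ ∀ A, g A = g ∅ ∆ A.image e := by
  obtain ⟨e, he_inj, hsingle⟩ := exists_injective_eq_symmDiff_singleton hg hadj
  refine ⟨e, he_inj, fun A => ?_⟩
  induction A using strongInduction with | H A ih => ?_
  obtain hA | hA | hA : #A = 0 ∨ #A = 1 ∨ 1 < #A := by omega
  · rw [card_eq_zero.1 hA, image_empty]
    exact (symmDiff_bot (g ∅)).symm
  · obtain ⟨i, rfl⟩ := card_eq_one.1 hA
    simpa using hsingle i
  obtain ⟨i, hi, j, hj, hij⟩ := one_lt_card.1 hA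
  set B := A ∆ {i} ∆ {j} with hBdef
  have hAi : A ∆ {i} ⊂ A := symmDiff_singleton_ssubset hi
  have hAj : A ∆ {j} ⊂ A := symmDiff_singleton_ssubset hj
  have hBA : B ⊂ A := (symmDiff_singleton_ssubset
    (mem_symmDiff.2 (.inl ⟨hj, mem_singleton.not.2 hij.symm⟩))).trans hAi
  have hB : g B = g ∅ ∆ B.image e := ih B hBA
  have hgAi : g (A ∆ {i}) = g B ∆ {e j} := by
    rw [ih _ hAi, show A ∆ {i} = B ∆ {j} by rw [hBdef, symmDiff_symmDiff_cancel_right],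
      image_symmDiff_singleton he_inj, ← symmDiff_assoc, hB]
  have hgAj : g (A ∆ {j}) = g B ∆ {e i} := by
    rw [ih _ hAj, show A ∆ {j} = B ∆ {i} by
        rw [hBdef, symmDiff_right_comm, symmDiff_symmDiff_cancel_right],
      image_symmDiff_singleton he_inj, ← symmDiff_assoc, hB]
  have hAB : A ≠ B := by
    rw [Ne, ← symmDiff_eq_empty, hBdef, symmDiff_assoc, symmDiff_symmDiff_cancel_left,
      symmDiff_eq_empty, singleton_inj]
    exact hij
  have hA_eq : A = B ∆ {j} ∆ {i} := by
    rw [hBdef, symmDiff_symmDiff_cancel_right, symmDiff_symmDiff_cancel_right]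
  calc g A = g B ∆ {e j} ∆ {e i} :=
        eq_symmDiff_symmDiff_of_card_symmDiff (he_inj.ne hij.symm) (hg.ne hAB)
          (hgAi ▸ hadj _ _ (by rw [symmDiff_symmDiff_cancel_left, card_singleton]))
          (hgAj ▸ hadj _ _ (by rw [symmDiff_symmDiff_cancel_left, card_singleton]))
    _ = g ∅ ∆ A.image e := by
      conv_rhs => rw [hA_eq, image_symmDiff_singleton he_inj, image_symmDiff_singleton he_inj]
      rw [hB]
      simp only [symmDiff_assoc]

lemma symmDiff_image_injective {e : ι → α} (he : Injective e) (X : Finset α) :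
    Injective fun A : Finset ι => X ∆ A.image e :=
  (symmDiff_right_injective X).comp (image_injective he)

lemma card_symmDiff_symmDiff_image [DecidableEq ι] {e : ι → α} (he : Injective e) (X : Finset α)
    (A B : Finset ι) : #((X ∆ A.image e) ∆ (X ∆ B.image e)) = #(A ∆ B) := by
  rw [symmDiff_symmDiff_symmDiff_comm, symmDiff_self, bot_symmDiff, ← image_symmDiff _ _ he,
    card_image_of_injective _ he]

lemma subset_symmDiff_image {e : ι → α} {X : Finset α} (he : ∀ i, e i ∉ X) (A : Finset ι) :
    X ⊆ X ∆ A.image e := by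
  rw [symmDiff_eq_union (disjoint_right.2 fun _ ha => by
    obtain ⟨i, -, rfl⟩ := mem_image.1 ha
    exact he i)]
  exact subset_union_left

lemma symmDiff_image_filter_mem [Fintype ι] (e : ι → α) (X : Finset α) :
    X ∆ ({i | e i ∈ X} : Finset ι).image e = X \ univ.image e := by
  ext a
  simp only [mem_symmDiff, mem_image, mem_filter, mem_univ, true_and, mem_sdiff]
  grind

lemma exists_injective_forall_notMem [Fintype ι] [Fintype α] (S : Finset α)
    (h : Fintype.card ι ≤ Fintype.card α - #S) : ∃ e : ι → α, Injective e ∧ ∀ i, e i ∉ S := by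
  obtain ⟨f⟩ := Function.Embedding.nonempty_of_card_le (α := ι) (β := ↥(Sᶜ))
    (by rwa [Fintype.card_coe, card_compl])
  exact ⟨fun i => f i, Subtype.val_injective.comp f.injective, fun i => mem_compl.1 (f i).2⟩

theorem exists_card_le_of_injective_of_adj [DecidableEq ι] [Fintype ι] [Fintype α]
    {g : Finset ι → Finset α} (hg : Injective g) (hadj : ∀ A B, #(A ∆ B) = 1 → #(g A ∆ g B) = 1) :
    ∃ A, #(g A) ≤ Fintype.card α - Fintype.card ι := by
  obtain ⟨e, he, hgA⟩ := exists_injective_eq_symmDiff_image hg hadj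
  refine ⟨({i | e i ∈ g ∅} : Finset ι), ?_⟩
  calc #(g _) = #(g ∅ \ univ.image e) := by rw [hgA, symmDiff_image_filter_mem]
    _ ≤ #(univ \ univ.image e) := card_le_card (sdiff_subset_sdiff (subset_univ _) le_rfl)
    _ = Fintype.card α - Fintype.card ι := by
      rw [card_univ_sdiff, card_image_of_injective _ he, card_univ]

end Finset

theorem stmt3_general (F : Finset (Finset V)) (hsup : SupersetClosed F)
    (t : ℕ) (ht : t ≤ Fintype.card V)
    (x : ℕ) (hx : IsLeast {k : ℕ | ∃ S ∈ F, S.card = k} x) :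
    x ≤ Fintype.card V - t ↔
      ∃ f : Finset (Fin t) → {S : Finset V // S ∈ F},
        Function.Injective f ∧
        ∀ A B : Finset (Fin t),
          (TARGraph F).Adj (f A) (f B) ↔ (symmDiff A B).card = 1 := by
  constructor
  · intro hle
    obtain ⟨S, hS, rfl⟩ := hx.1
    obtain ⟨e, he, heS⟩ := exists_injective_forall_notMem (ι := Fin t) S
      (by rw [Fintype.card_fin]; omega)
    exact ⟨fun A => ⟨S ∆ A.image e, hsup hS (subset_symmDiff_image heS A)⟩,
      fun A B h => symmDiff_image_injective he S (congrArg Subtype.val h),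
      fun A B => by rw [← card_symmDiff_symmDiff_image he S A B]; rfl⟩
  · rintro ⟨f, hf, hadj⟩
    obtain ⟨A, hA⟩ := exists_card_le_of_injective_of_adj (g := fun A => (f A).1)
      (Subtype.val_injective.comp hf) (fun A B h => (hadj A B).2 h)
    rw [Fintype.card_fin] at hA
    exact (hx.2 ⟨_, (f A).2, rfl⟩).trans hA

theorem stmt3 (F : Finset (Finset V)) (hne : F.Nonempty) (hsup : SupersetClosed F)
    (t : ℕ) (ht : t ≤ Fintype.card V)
    (x : ℕ) (hx : IsLeast {k : ℕ | ∃ S ∈ F, S.card = k} x) :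
    x ≤ Fintype.card V - t ↔
      ∃ f : Finset (Fin t) → {S : Finset V // S ∈ F},
        Function.Injective f ∧
        ∀ A B : Finset (Fin t),
          (TARGraph F).Adj (f A) (f B) ↔ (symmDiff A B).card = 1 :=
  stmt3_general F hsup t ht x hx
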